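/- arXiv:1907.10390 — 5 statements merged into one kernel-verified Lean document; each statement's English description precedes it below -/
import Mathlib

section
/- Let R be a commutative ring, n ≥ 1, and let g and u be Laurent polynomials in x_1,…,x_n over R. For 1 ≤ i ≤ n let θ_i denote the operator x_i ∂/∂x_i on Laurent polynomials, i.e., θ_i(Σ_w u_w x^w) = Σ_w w_i u_w x^w. Then for every m ≥ 1, the constant term of the Laurent polynomial g^m · θ_i(u) lies in the ideal mR. (This is the key divisibility showing that ω ↦ constant term of g^m ω is a period map mod m: it sends derivatives into mR.) -/
noncomputable section

/-- The operator `θ_i = x_i ∂/∂x_i` on Laurent polynomials: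
`θ_i(Σ_w u_w x^w) = Σ_w w_i u_w x^w`. -/
def theta {R : Type*} [CommRing R] {n : ℕ} (i : Fin n)
    (u : AddMonoidAlgebra R (Fin n → ℤ)) : AddMonoidAlgebra R (Fin n → ℤ) :=
  AddMonoidAlgebra.ofCoeff (Finsupp.onFinset u.coeff.support (fun w => (w i : R) * u.coeff w)
    (fun w h => Finsupp.mem_support_iff.2 fun h0 => h (by simp [h0])))


/-! `θ_i` is an `R`-derivation whose values all have constant term zero, so constant terms
may be integrated by parts: `CT(g^m θ_i u) = -CT(θ_i(g^m) u) = -m CT(g^(m-1) θ_i(g) u)`. -/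

section Theta

variable {R : Type*} [CommRing R] {n : ℕ} (i : Fin n)

open AddMonoidAlgebra

lemma coeff_theta (u : AddMonoidAlgebra R (Fin n → ℤ)) (w : Fin n → ℤ) :
    (theta i u).coeff w = (w i : R) * u.coeff w := rfl

lemma coeff_zero_theta (u : AddMonoidAlgebra R (Fin n → ℤ)) : (theta i u).coeff 0 = 0 := by
  simp [coeff_theta]

@[simp]
lemma theta_zero : theta i (0 : AddMonoidAlgebra R (Fin n → ℤ)) = 0 := by
  ext w; simp [coeff_theta]

lemma theta_add (u v : AddMonoidAlgebra R (Fin n → ℤ)) :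
    theta i (u + v) = theta i u + theta i v := by
  ext w; simp [coeff_theta, mul_add]

lemma theta_smul (r : R) (u : AddMonoidAlgebra R (Fin n → ℤ)) :
    theta i (r • u) = r • theta i u := by
  ext w; simp [coeff_theta, mul_left_comm]

lemma theta_single (w : Fin n → ℤ) (r : R) :
    theta i (single w r) = single w ((w i : R) * r) := by
  ext v
  by_cases h : w = v <;> simp [coeff_theta, coeff_single, h]

lemma theta_mul (f g : AddMonoidAlgebra R (Fin n → ℤ)) :
    theta i (f * g) = f * theta i g + g * theta i f := by
  induction f using induction_linear with
  | zero => simp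
  | add f₁ f₂ h₁ h₂ => rw [add_mul, theta_add, h₁, h₂, theta_add]; ring
  | single a r =>
    induction g using induction_linear with
    | zero => simp
    | add g₁ g₂ h₁ h₂ => rw [mul_add, theta_add, h₁, h₂, theta_add]; ring
    | single b s =>
      simp only [single_mul_single, theta_single, Pi.add_apply, Int.cast_add]
      rw [add_comm b a, ← single_add]
      congr 1
      ring

def thetaDerivation :
    Derivation R (AddMonoidAlgebra R (Fin n → ℤ)) (AddMonoidAlgebra R (Fin n → ℤ)) :=
  Derivation.mk' ⟨⟨theta i, theta_add i⟩, theta_smul i⟩ (theta_mul i)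

lemma theta_pow (g : AddMonoidAlgebra R (Fin n → ℤ)) (m : ℕ) :
    theta i (g ^ m) = m • (g ^ (m - 1) * theta i g) :=
  (thetaDerivation i).leibniz_pow g m

lemma coeff_zero_theta_mul (f g : AddMonoidAlgebra R (Fin n → ℤ)) :
    (theta i f * g).coeff 0 = -(f * theta i g).coeff 0 := by
  have hzero := coeff_zero_theta i (f * g)
  rw [theta_mul, coeff_add, Finsupp.add_apply, mul_comm g] at hzero
  exact eq_neg_of_add_eq_zero_right hzero

end Theta

theorem constantTerm_pow_mul_theta_dvd_general
    {R : Type*} [CommRing R] (n : ℕ)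
    (g u : AddMonoidAlgebra R (Fin n → ℤ)) (i : Fin n)
    (m : ℕ) :
    (m : R) ∣ (g ^ m * theta i u).coeff 0 := by
  rw [mul_comm, coeff_zero_theta_mul, theta_pow, mul_smul_comm, AddMonoidAlgebra.coeff_smul_apply,
    nsmul_eq_mul, dvd_neg]
  exact dvd_mul_right _ _

/-- Key divisibility: the constant term of `g^m · θ_i(u)` lies in `mR`; that is,
the period map mod `m` given by `ω ↦ constant term of g^m ω` kills derivatives mod `m`. -/
theorem constantTerm_pow_mul_theta_dvd
    {R : Type*} [CommRing R] (n : ℕ) (hn : 1 ≤ n)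
    (g u : AddMonoidAlgebra R (Fin n → ℤ)) (i : Fin n)
    (m : ℕ) (hm : 1 ≤ m) :
    (m : R) ∣ (g ^ m * theta i u).coeff 0 :=
  constantTerm_pow_mul_theta_dvd_general n g u i m
end
end

section
/- Let R be a commutative ring equipped with a derivation δ : R → R (additive and satisfying the Leibniz rule), extended coefficientwise to Laurent polynomials in x_1,…,x_n over R. Let g and ω be Laurent polynomials over R and m ≥ 1. Then δ(constant term of g^m·ω) − (constant term of g^m·δ(ω)) lies in the ideal mR. (This shows the period map mod m given by ω ↦ constant term of g^m ω commutes with δ modulo m.) -/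
/-!
Extending `δ` coefficientwise gives a derivation `D` of the Laurent polynomial ring, and taking
the constant term commutes with `D`. By the Leibniz rule,
`D (g ^ m * ω) - g ^ m * D ω = m * g ^ (m - 1) * D g * ω`, whose constant term is a multiple of `m`.
-/

open AddMonoidAlgebra

namespace Derivation

variable {A : Type*} [CommRing A]

def ofAddLeibniz (δ : A → A) (hadd : ∀ a b : A, δ (a + b) = δ a + δ b)
    (hleibniz : ∀ a b : A, δ (a * b) = a * δ b + δ a * b) : Derivation ℤ A A :=
  Derivation.mk' (AddMonoidHom.mk' δ hadd).toIntLinearMap fun a b => by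
    simp [hleibniz, mul_comm]

variable {R G : Type*} [CommRing R] [Algebra R A] [AddCommMonoid G]

noncomputable def mapCoeffsAddMonoidAlgebra (d : Derivation R A A) : Derivation R A[G] A[G] :=
  Derivation.mk'
    { toFun := AddMonoidAlgebra.map d.toLinearMap.toAddMonoidHom
      map_add' := AddMonoidAlgebra.map_add _
      map_smul' := fun r x => by ext; simp }
    fun x y => by
      induction x using AddMonoidAlgebra.induction_linear with
      | zero => simp
      | add x x' hx hx' => simp only [add_mul, map_add, add_smul, smul_add, hx, hx']; abel
      | single m r =>
        induction y using AddMonoidAlgebra.induction_linear with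
        | zero => simp
        | add y y' hy hy' => simp only [mul_add, map_add, add_smul, smul_add, hy, hy']; abel
        | single m' r' => simp [single_mul_single, smul_eq_mul, add_comm]

end Derivation

theorem Derivation.natCast_dvd_apply_pow_mul_sub {R S : Type*} [CommRing R] [CommRing S]
    [Algebra R S] (D : Derivation R S S) (g ω : S) (m : ℕ) :
    (m : S) ∣ D (g ^ m * ω) - g ^ m * D ω :=
  ⟨g ^ (m - 1) * D g * ω, by
    rw [leibniz, leibniz_pow, smul_eq_mul, smul_eq_mul, nsmul_eq_mul]; ring⟩

theorem AddMonoidAlgebra.natCast_dvd_coeff {A G : Type*} [CommRing A] [AddMonoid G] (m : ℕ)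
    {x : A[G]} (hx : (m : A[G]) ∣ x) (w : G) : (m : A) ∣ x.coeff w := by
  obtain ⟨y, rfl⟩ := hx
  exact ⟨y.coeff w, by rw [← nsmul_eq_mul, coeff_smul, Finsupp.smul_apply, nsmul_eq_mul]⟩

theorem periodMap_modm_commutes_derivation_general
    {R : Type*} [CommRing R] (n : ℕ)
    (δ : R → R)
    (hadd : ∀ a b : R, δ (a + b) = δ a + δ b)
    (hleibniz : ∀ a b : R, δ (a * b) = a * δ b + δ a * b)
    (g ω Dω : AddMonoidAlgebra R (Fin n → ℤ))
    (hDω : ∀ w : Fin n → ℤ, Dω.coeff w = δ (ω.coeff w))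
    (m : ℕ) :
    (m : R) ∣ δ ((g ^ m * ω).coeff 0) - (g ^ m * Dω).coeff 0 := by
  let D := (Derivation.ofAddLeibniz δ hadd hleibniz).mapCoeffsAddMonoidAlgebra (G := Fin n → ℤ)
  obtain rfl : Dω = D ω := by ext w; exact hDω w
  exact AddMonoidAlgebra.natCast_dvd_coeff m (D.natCast_dvd_apply_pow_mul_sub g ω m) 0

/-- The period map mod `m` given by `ω ↦ constant term of g^m·ω` commutes with a
derivation `δ` modulo `m`: `δ(constant term of g^m·ω) − constant term of g^m·δ(ω) ∈ mR`.
Here `Dω` is the coefficientwise application of `δ` to `ω`. -/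
theorem periodMap_modm_commutes_derivation
    {R : Type*} [CommRing R] (n : ℕ)
    (δ : R → R)
    (hadd : ∀ a b : R, δ (a + b) = δ a + δ b)
    (hleibniz : ∀ a b : R, δ (a * b) = a * δ b + δ a * b)
    (g ω Dω : AddMonoidAlgebra R (Fin n → ℤ))
    (hDω : ∀ w : Fin n → ℤ, Dω.coeff w = δ (ω.coeff w))
    (m : ℕ) (hm : 1 ≤ m) :
    (m : R) ∣ δ ((g ^ m * ω).coeff 0) - (g ^ m * Dω).coeff 0 :=
  periodMap_modm_commutes_derivation_general n δ hadd hleibniz g ω Dω hDω m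
end

section
/- Let p be a prime, let a_1,…,a_N ∈ ℤ^n be pairwise distinct, and let f(x) = Σ_{r=1}^N v_r x^{a_r} be the Laurent polynomial in x_1,…,x_n with coefficients in the polynomial ring ℤ[v_1,…,v_N]. For i, j ∈ {1,…,N} define (γ_p)_{j,i} = Σ_{k=1}^p (−1)^{k+1} C(p,k) v_i^{p−k} · (coefficient of x^{k a_i − a_j} in f(x)^{k−1}) ∈ ℤ[v_1,…,v_N] (with f^0 = 1). Then for every nonempty subset J ⊆ {1,…,N}, the coefficient of the monomial ∏_{j∈J} v_j^{p−1} in the determinant of the J×J matrix ((γ_p)_{j,i})_{j,i∈J} equals 1. In particular this determinant, and hence the determinant of the Hasse–Witt matrix it is congruent to modulo p, is not divisible by p. -/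
noncomputable section

/-- The generic Laurent polynomial `f(x) = Σ_{r=1}^N v_r x^{a_r}` with coefficients in the
polynomial ring `ℤ[v_1,…,v_N]`. -/
def genericF (n N : ℕ) (a : Fin N → (Fin n → ℤ)) :
    AddMonoidAlgebra (MvPolynomial (Fin N) ℤ) (Fin n → ℤ) :=
  ∑ r : Fin N, AddMonoidAlgebra.single (a r) (MvPolynomial.X r)

/-- The entry `(γ_p)_{j,i} = Σ_{k=1}^p (−1)^{k+1} C(p,k) v_i^{p−k}·(coefficient of
`x^{k a_i − a_j}` in `f^{k−1}`) ∈ ℤ[v_1,…,v_N]`. -/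
def gammaPEntry (n N p : ℕ) (a : Fin N → (Fin n → ℤ)) (j i : Fin N) :
    MvPolynomial (Fin N) ℤ :=
  ∑ k ∈ Finset.Icc 1 p,
    (-1 : MvPolynomial (Fin N) ℤ) ^ (k + 1) * (Nat.choose p k : MvPolynomial (Fin N) ℤ) *
      (MvPolynomial.X i) ^ (p - k) * ((genericF n N a) ^ (k - 1)).coeff ((k : ℤ) • a i - a j)

/-!
Killing the variables `v_r`, `r ∉ J`, does not change the coefficient of `∏_{j ∈ J} v_j^{p-1}`
and turns `f` into `f_J = Σ_{r ∈ J} v_r x^{a_r}`. If `a_{i₀}` is lexicographically least among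
the `a_r`, `r ∈ J`, every exponent of `f_J^m` is at least `m a_{i₀}`, and the coefficient of
`x^{m a_{i₀}}` is `v_{i₀}^m`. Hence the column `i₀` of `γ_p` is `v_{i₀}^{p-1} e_{i₀}`, because
`Σ_{k=1}^p (-1)^{k+1} C(p,k) = 1`. Expanding the determinant along that column and killing `v_{i₀}`
gives the same situation for `J \ {i₀}`, so the coefficient is `1` by induction.
Modulo `p` only the term `k = p` of `(γ_p)_{j,i}` survives, so `γ_p` is congruent to `(-1)^{p+1}`
times the Hasse–Witt matrix.
-/

open Finset MvPolynomial AddMonoidAlgebra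

namespace AddMonoidAlgebra

variable {R A B : Type*} [CommSemiring R] [AddCommMonoid A] [AddCommMonoid B] [LinearOrder B]
  [IsOrderedCancelAddMonoid B] {D : A →+ B} {P : R[A]} {a₀ : A}

theorem map_nsmul_le_of_mem_support_pow (hP : ∀ a ∈ P.coeff.support, D a₀ ≤ D a) (m : ℕ)
    {a : A} (ha : a ∈ (P ^ m).coeff.support) : D (m • a₀) ≤ D a := by
  classical
  induction m generalizing a with
  | zero =>
    rw [pow_zero, AddMonoidAlgebra.one_def] at ha
    simp [Finset.mem_singleton.1 (Finsupp.support_single_subset ha)]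
  | succ m ih =>
    rw [pow_succ] at ha
    obtain ⟨b, hb, c, hc, rfl⟩ := Finset.mem_add.1 (support_coeff_mul_subset _ _ ha)
    rw [succ_nsmul, map_add, map_add]
    exact add_le_add (ih hb) (hP c hc)

theorem coeff_pow_nsmul_of_forall_le (hD : Function.Injective D)
    (hP : ∀ a ∈ P.coeff.support, D a₀ ≤ D a) (m : ℕ) :
    (P ^ m).coeff (m • a₀) = P.coeff a₀ ^ m := by
  induction m with
  | zero => simp [AddMonoidAlgebra.one_def]
  | succ m ih =>
    rw [pow_succ, succ_nsmul, coeff_mul_add_of_uniqueAdd, ih, pow_succ]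
    intro b c hb hc hbc
    have := (add_eq_add_iff_eq_and_eq (map_nsmul_le_of_mem_support_pow hP m hb) (hP c hc)).1
      (by rw [← map_add, ← map_add, hbc])
    exact ⟨hD this.1.symm, hD this.2.symm⟩

theorem coeff_pow_eq_zero_of_lt (hP : ∀ a ∈ P.coeff.support, D a₀ ≤ D a) {m : ℕ} {a : A}
    (ha : D a < D (m • a₀)) : (P ^ m).coeff a = 0 :=
  Finsupp.notMem_support_iff.1 fun h => (map_nsmul_le_of_mem_support_pow hP m h).not_gt ha

end AddMonoidAlgebra

theorem Matrix.det_eq_mul_det_erase {ι R : Type*} [DecidableEq ι] [CommRing R] {S : Finset ι}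
    (M : Matrix S S R) {i : ι} (hi : i ∈ S) (hcol : ∀ j : S, (j : ι) ≠ i → M j ⟨i, hi⟩ = 0) :
    M.det = M ⟨i, hi⟩ ⟨i, hi⟩ * (M.submatrix (fun j : S.erase i => ⟨j, mem_of_mem_erase j.2⟩)
      (fun j : S.erase i => ⟨j, mem_of_mem_erase j.2⟩)).det := by
  rw [M.twoBlockTriangular_det (fun j => (j : ι) = i)
    (fun j hj k hk => by rw [show k = ⟨i, hi⟩ from Subtype.ext hk]; exact hcol j hj)]
  have : Subsingleton {j : S // (j : ι) = i} :=
    ⟨fun j k => Subtype.ext (Subtype.ext (j.2.trans k.2.symm))⟩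
  rw [Matrix.det_eq_elem_of_subsingleton _ ⟨⟨i, hi⟩, rfl⟩]
  congr 1
  let e : S.erase i ≃ {j : S // ¬ (j : ι) = i} :=
    ((Equiv.subtypeSubtypeEquivSubtypeInter (· ∈ S) (¬ · = i)).trans
      (Equiv.subtypeEquivRight fun x => by simp [and_comm])).symm
  exact (Matrix.det_submatrix_equiv_self e _).symm

theorem sum_Icc_neg_one_pow_mul_choose {R : Type*} [CommRing R] {p : ℕ} (hp : p ≠ 0) :
    ∑ k ∈ Icc 1 p, (-1 : R) ^ (k + 1) * p.choose k = 1 := by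
  have h := Int.alternating_sum_range_choose_of_ne hp
  rw [range_eq_Ico, sum_eq_sum_Ico_succ_bot p.succ_pos, Nat.succ_eq_add_one, zero_add,
    Ico_add_one_right_eq_Icc] at h
  have hZ : ∑ k ∈ Icc 1 p, (-1 : ℤ) ^ (k + 1) * p.choose k = 1 := by
    simp only [pow_zero, Nat.choose_zero_right, Nat.cast_one, one_mul] at h
    simp only [pow_succ, mul_neg_one, neg_mul, sum_neg_distrib]
    linarith
  simpa using congrArg (Int.cast : ℤ → R) hZ

section Kill

variable {σ R : Type*} [CommRing R] [DecidableEq σ]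

def killOutside (T : Finset σ) : MvPolynomial σ R →ₐ[R] MvPolynomial σ R :=
  aeval fun r => if r ∈ T then X r else 0

theorem killOutside_X (T : Finset σ) (r : σ) :
    killOutside T (X r : MvPolynomial σ R) = if r ∈ T then X r else 0 :=
  aeval_X _ _

theorem sub_killOutside_mem_span (T : Finset σ) (P : MvPolynomial σ R) :
    P - killOutside T P ∈ Ideal.span (X '' (↑T)ᶜ : Set (MvPolynomial σ R)) := by
  induction P using MvPolynomial.induction_on with
  | C c => simp
  | add P Q hP hQ => rw [map_add, add_sub_add_comm]; exact add_mem hP hQ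
  | mul_X P r hP =>
    rw [map_mul, killOutside_X]
    split_ifs with hr
    · rw [← sub_mul]; exact Ideal.mul_mem_right _ _ hP
    · rw [mul_zero, sub_zero]
      exact Ideal.mul_mem_left _ _ (Ideal.subset_span ⟨r, hr, rfl⟩)

theorem coeff_killOutside {T : Finset σ} {u : σ →₀ ℕ} (hu : ∀ r ∉ T, u r = 0)
    (P : MvPolynomial σ R) : coeff u (killOutside T P) = coeff u P := by
  by_contra h
  obtain ⟨r, hr, hur⟩ := mem_ideal_span_X_image.1 (sub_killOutside_mem_span T P) u
    (mem_support_iff.2 (by rw [coeff_sub]; exact sub_ne_zero.2 (Ne.symm h)))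
  exact hur (hu r hr)

end Kill

theorem sum_single_apply_eq_zero {σ : Type*} {T : Finset σ} {e : ℕ} {r : σ} (hr : r ∉ T) :
    (∑ j ∈ T, Finsupp.single j e) r = 0 := by
  rw [Finsupp.finsetSum_apply]
  exact sum_eq_zero fun j hj => Finsupp.single_eq_of_ne (ne_of_mem_of_not_mem hj hr).symm

section Gamma

variable {σ R G : Type*} [CommRing R]

/-- `(γ_p)_{j,i}` for an arbitrary Laurent polynomial `F` in place of `f`. -/
def gammaEntry [AddCommGroup G] (p : ℕ) (a : σ → G) (F : (MvPolynomial σ R)[G]) (j i : σ) :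
    MvPolynomial σ R :=
  ∑ k ∈ Finset.Icc 1 p,
    (-1 : MvPolynomial σ R) ^ (k + 1) * (Nat.choose p k : MvPolynomial σ R) *
      (MvPolynomial.X i) ^ (p - k) * (F ^ (k - 1)).coeff ((k : ℤ) • a i - a j)

def genericFOn (a : σ → G) (S : Finset σ) : (MvPolynomial σ R)[G] :=
  ∑ r ∈ S, single (a r) (X r)

theorem gammaPEntry_eq_gammaEntry (n N p : ℕ) (a : Fin N → (Fin n → ℤ)) :
    gammaPEntry n N p a = gammaEntry p a (genericFOn a univ) :=
  rfl

theorem map_gammaEntry [AddCommGroup G] {S : Type*} [CommRing S]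
    (ψ : MvPolynomial σ R →+* MvPolynomial σ S) (p : ℕ) (a : σ → G) (F : (MvPolynomial σ R)[G])
    (j : σ) {i : σ} (hi : ψ (X i) = X i) :
    ψ (gammaEntry p a F j i) = gammaEntry p a (mapRingHom G ψ F) j i := by
  simp only [gammaEntry, map_sum]
  refine sum_congr rfl fun k _ => ?_
  rw [← map_pow, coeff_mapRingHom]
  simp [hi]

theorem gammaEntry_eq_of_charP [AddCommGroup G] (p : ℕ) [Fact p.Prime] [CharP R p] (a : σ → G)
    (F : (MvPolynomial σ R)[G]) (j i : σ) :
    gammaEntry p a F j i = (-1) ^ (p + 1) * (F ^ (p - 1)).coeff ((p : ℤ) • a i - a j) := by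
  have hp : p.Prime := Fact.out
  rw [gammaEntry, sum_eq_single_of_mem p (right_mem_Icc.2 hp.one_le)]
  · simp
  · intro k hk hkp
    rw [(CharP.cast_eq_zero_iff (MvPolynomial σ R) p _).2
      (hp.dvd_choose_self (by grind) (by grind)), mul_zero, zero_mul, zero_mul]

theorem coeff_genericFOn_self {a : σ → G} (ha : Function.Injective a) {S : Finset σ} {i : σ}
    (hi : i ∈ S) : (genericFOn a S : (MvPolynomial σ R)[G]).coeff (a i) = X i := by
  rw [genericFOn, AddMonoidAlgebra.coeff_sum, Finsupp.finsetSum_apply,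
    Finset.sum_eq_single_of_mem i hi]
  · simp
  · intro r _ hr
    simp [ha.ne hr]

theorem exists_eq_of_mem_support_genericFOn {a : σ → G} {S : Finset σ} {x : G}
    (hx : x ∈ (genericFOn a S : (MvPolynomial σ R)[G]).coeff.support) : ∃ r ∈ S, a r = x := by
  by_contra! h
  apply Finsupp.mem_support_iff.1 hx
  rw [genericFOn, AddMonoidAlgebra.coeff_sum, Finsupp.finsetSum_apply]
  exact sum_eq_zero fun r hr => by simp [h r hr]

theorem mapRingHom_killOutside_genericFOn [AddMonoid G] [DecidableEq σ] (a : σ → G)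
    {S T : Finset σ} (hT : T ⊆ S) :
    mapRingHom G (killOutside (R := R) T : MvPolynomial σ R →+* MvPolynomial σ R) (genericFOn a S) =
      genericFOn a T := by
  simp only [genericFOn, map_sum, mapRingHom_single, RingHom.coe_coe, killOutside_X,
    apply_ite (single _), single_zero]
  rw [sum_ite_mem, inter_eq_right.2 hT]

variable [AddCommGroup G] [DecidableEq σ] {B : Type*} [AddCommMonoid B] [LinearOrder B]
  [IsOrderedCancelAddMonoid B] {D : G →+ B} {a : σ → G}

theorem gammaEntry_genericFOn_of_isMin (hD : Function.Injective D) (ha : Function.Injective a)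
    {S : Finset σ} {i₀ : σ} (hi₀ : i₀ ∈ S) (hmin : ∀ r ∈ S, D (a i₀) ≤ D (a r)) {p : ℕ}
    (hp : p ≠ 0) {j : σ} (hj : j ∈ S) :
    gammaEntry p a (genericFOn a S : (MvPolynomial σ R)[G]) j i₀ =
      if j = i₀ then X i₀ ^ (p - 1) else 0 := by
  have hF : ∀ x ∈ (genericFOn a S : (MvPolynomial σ R)[G]).coeff.support, D (a i₀) ≤ D x := by
    intro x hx
    obtain ⟨r, hr, rfl⟩ := exists_eq_of_mem_support_genericFOn hx
    exact hmin r hr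
  have hk : ∀ k ∈ Icc 1 p, ∃ m, k = m + 1 ∧ (k : ℤ) • a i₀ = m • a i₀ + a i₀ := by
    intro k hk
    refine ⟨k - 1, by grind, ?_⟩
    rw [← succ_nsmul, Nat.sub_add_cancel (mem_Icc.1 hk).1, natCast_zsmul]
  split_ifs with hji
  · subst hji
    calc gammaEntry p a (genericFOn a S) j j
        = ∑ k ∈ Icc 1 p, (-1 : MvPolynomial σ R) ^ (k + 1) * (p.choose k : MvPolynomial σ R) *
            X j ^ (p - 1) := by
          refine sum_congr rfl fun k hkp => ?_
          obtain ⟨m, rfl, hm⟩ := hk k hkp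
          rw [hm, add_sub_cancel_right, Nat.add_sub_cancel, coeff_pow_nsmul_of_forall_le hD hF,
            coeff_genericFOn_self ha hi₀, mul_assoc, ← pow_add]
          congr 3
          grind
      _ = X j ^ (p - 1) := by rw [← sum_mul, sum_Icc_neg_one_pow_mul_choose hp, one_mul]
  · have hlt : D (a i₀) < D (a j) := (hmin j hj).lt_of_ne fun h => hji (ha (hD h)).symm
    refine sum_eq_zero fun k hkp => ?_
    obtain ⟨m, rfl, hm⟩ := hk k hkp
    rw [Nat.add_sub_cancel, hm, coeff_pow_eq_zero_of_lt hF, mul_zero]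
    refine lt_of_add_lt_add_right (a := D (a j)) ?_
    rwa [← map_add, sub_add_cancel, map_add, add_lt_add_iff_left]

theorem coeff_det_gammaEntry_genericFOn (hD : Function.Injective D) (ha : Function.Injective a)
    {p : ℕ} (hp : p ≠ 0) (S : Finset σ) :
    coeff (∑ j ∈ S, Finsupp.single j (p - 1))
      (Matrix.of fun j i : S => gammaEntry p a (genericFOn a S : (MvPolynomial σ R)[G]) j i).det
      = 1 := by
  induction S using Finset.strongInduction with
  | H S ih =>
    obtain rfl | hS := S.eq_empty_or_nonempty
    · simp
    obtain ⟨i₀, hi₀, hmin⟩ := exists_min_image S (fun r => D (a r)) hS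
    have hcol := fun j : S => gammaEntry_genericFOn_of_isMin (R := R) hD ha hi₀ hmin hp j.2
    rw [Matrix.det_eq_mul_det_erase _ hi₀ (fun j hj => by simp [hcol, hj]), Matrix.of_apply,
      hcol, if_pos rfl, ← add_sum_erase S _ hi₀, X_pow_eq_monomial, coeff_monomial_mul, one_mul,
      ← coeff_killOutside (T := S.erase i₀) (fun _ => sum_single_apply_eq_zero), AlgHom.map_det]
    convert ih _ (erase_ssubset hi₀) using 3
    refine Matrix.ext fun j i => ?_
    rw [AlgHom.mapMatrix_apply, Matrix.map_apply, Matrix.submatrix_apply, Matrix.of_apply,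
      Matrix.of_apply, ← AlgHom.coe_toRingHom,
      map_gammaEntry _ _ _ _ _ (by simp [killOutside_X, i.2]),
      mapRingHom_killOutside_genericFOn _ (erase_subset _ _)]

end Gamma

section

variable {n N : ℕ} {a : Fin N → (Fin n → ℤ)}

theorem coeff_det_gammaPEntry {p : ℕ} (hp : p ≠ 0) (ha : Function.Injective a)
    (J : Finset (Fin N)) :
    coeff (∑ j ∈ J, Finsupp.single j (p - 1))
      (Matrix.of fun j i : J => gammaPEntry n N p a j i).det = 1 := by
  rw [← coeff_killOutside (fun _ => sum_single_apply_eq_zero), AlgHom.map_det]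
  convert coeff_det_gammaEntry_genericFOn (D := (toLexAddEquiv (Fin n → ℤ)).toAddMonoidHom)
    (toLexAddEquiv _).injective ha hp J using 3
  refine Matrix.ext fun j i => ?_
  rw [AlgHom.mapMatrix_apply, Matrix.map_apply, Matrix.of_apply, Matrix.of_apply,
    gammaPEntry_eq_gammaEntry, ← AlgHom.coe_toRingHom,
    map_gammaEntry _ _ _ _ _ (by simp [killOutside_X, i.2]),
    mapRingHom_killOutside_genericFOn _ (subset_univ J)]

theorem map_det_gammaPEntry (p : ℕ) [Fact p.Prime] (J : Finset (Fin N)) :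
    map (Int.castRingHom (ZMod p)) (Matrix.of fun j i : J => gammaPEntry n N p a j i).det =
      (-1) ^ ((p + 1) * Fintype.card J) * map (Int.castRingHom (ZMod p)) (Matrix.of fun j i : J =>
        ((genericF n N a) ^ (p - 1)).coeff ((p : ℤ) • a (i : Fin N) - a (j : Fin N))).det := by
  rw [RingHom.map_det, RingHom.map_det, pow_mul, ← Matrix.det_smul]
  congr 1
  refine Matrix.ext fun j i => ?_
  rw [RingHom.mapMatrix_apply, Matrix.map_apply, Matrix.of_apply, gammaPEntry_eq_gammaEntry,
    map_gammaEntry _ _ _ _ _ (map_X _ _), gammaEntry_eq_of_charP, ← map_pow, coeff_mapRingHom]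
  rfl

end

theorem not_natCast_dvd_of_coeff_eq_one {σ : Type*} {p : ℕ} (hp : p ≠ 1)
    {P : MvPolynomial σ ℤ} {u : σ →₀ ℕ} (h : coeff u P = 1) : ¬ (p : MvPolynomial σ ℤ) ∣ P := by
  rw [← C_eq_coe_nat, C_dvd_iff_dvd_coeff]
  intro hdvd
  have := hdvd u
  rw [h] at this
  exact hp (Nat.dvd_one.1 (Int.natCast_dvd_natCast.1 this))

theorem gammaP_det_coeff_eq_one_general
    (p : ℕ) [Fact p.Prime] (n N : ℕ)
    (a : Fin N → (Fin n → ℤ)) (ha : Function.Injective a)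
    (J : Finset (Fin N)) :
    MvPolynomial.coeff (∑ j ∈ J, Finsupp.single j (p - 1))
        (Matrix.det (Matrix.of fun j i : J => gammaPEntry n N p a (j : Fin N) (i : Fin N))) = 1 ∧
      ¬ (p : MvPolynomial (Fin N) ℤ) ∣
        Matrix.det (Matrix.of fun j i : J => gammaPEntry n N p a (j : Fin N) (i : Fin N)) ∧
      ¬ (p : MvPolynomial (Fin N) ℤ) ∣
        Matrix.det (Matrix.of fun j i : J =>
          ((genericF n N a) ^ (p - 1)).coeff ((p : ℤ) • a (i : Fin N) - a (j : Fin N))) := by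
  have hp : p.Prime := Fact.out
  have hcoeff := coeff_det_gammaPEntry hp.ne_zero ha J
  have hγ := not_natCast_dvd_of_coeff_eq_one hp.ne_one hcoeff
  refine ⟨hcoeff, hγ, fun hHW => hγ ?_⟩
  rw [← C_eq_coe_nat, C_dvd_iff_zmod] at hHW ⊢
  rw [map_det_gammaPEntry, hHW, mul_zero]

/-- For every nonempty `J ⊆ {1,…,N}`, the coefficient of `∏_{j∈J} v_j^{p−1}` in
`det((γ_p)_{j,i})_{j,i∈J}` equals `1`; in particular this determinant, and the determinant
of the Hasse–Witt matrix congruent to it mod `p`, is not divisible by `p`. -/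
theorem gammaP_det_coeff_eq_one
    (p : ℕ) [Fact p.Prime] (n N : ℕ)
    (a : Fin N → (Fin n → ℤ)) (ha : Function.Injective a)
    (J : Finset (Fin N)) (hJ : J.Nonempty) :
    MvPolynomial.coeff (∑ j ∈ J, Finsupp.single j (p - 1))
        (Matrix.det (Matrix.of fun j i : J => gammaPEntry n N p a (j : Fin N) (i : Fin N))) = 1 ∧
      ¬ (p : MvPolynomial (Fin N) ℤ) ∣
        Matrix.det (Matrix.of fun j i : J => gammaPEntry n N p a (j : Fin N) (i : Fin N)) ∧
      ¬ (p : MvPolynomial (Fin N) ℤ) ∣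
        Matrix.det (Matrix.of fun j i : J =>
          ((genericF n N a) ^ (p - 1)).coeff ((p : ℤ) • a (i : Fin N) - a (j : Fin N))) :=
  gammaP_det_coeff_eq_one_general p n N a ha J
end
end

section
/- Define Γ* : ℤ → ℚ by Γ*(n) = (n−1)! for n ≥ 1 and Γ*(n) = (−1)^n/(−n)! for n ≤ 0. Let N ≥ 1, i ∈ {1,…,N}, and let ℓ = (ℓ_1,…,ℓ_N) ∈ ℤ^N be nonzero with ℓ_r ≥ 0 for all r ≠ i and Σ_{r=1}^N ℓ_r = 0. Then for every j ∈ {1,…,N}, the rational number ℓ_j · ∏_{r=1}^N 1/Γ*(ℓ_r + 1) is an integer. (This is the integrality of the coefficients of the A-hypergeometric period series Ψ.) -/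
/-!
With `S = -ℓ_i = Σ_{r≠i} ℓ_r`, the product equals `(-1)^(S-1) (S-1)! / ∏_{r≠i} ℓ_r!`.
Multiplying by `ℓ_i = -S` gives `±` a multinomial coefficient `S! / ∏ ℓ_r!`; multiplying by
`ℓ_j` with `j ≠ i` and `ℓ_j ≥ 1` gives `±` the multinomial coefficient of `ℓ` with `ℓ_j`
lowered by one, since `ℓ_j · (S-1)! / ∏ ℓ_r! = (S-1)! / ((ℓ_j - 1)! ∏_{r≠i,j} ℓ_r!)`.
-/

noncomputable section

/-- The modified Gamma function on integers: `Γ*(n) = (n−1)!` if `n ≥ 1` and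
`Γ*(n) = (−1)^n/|n|!` if `n ≤ 0`. -/
def gammaStar (n : ℤ) : ℚ :=
  if 1 ≤ n then ((n - 1).toNat.factorial : ℚ)
  else (-1 : ℚ) ^ n / ((-n).toNat.factorial : ℚ)

open Finset Nat

theorem Nat.prod_factorial_dvd_mul_factorial_sum_sub_one {ι : Type*} [DecidableEq ι]
    {s : Finset ι} (n : ι → ℕ) {j : ι} (hj : j ∈ s) :
    ∏ r ∈ s, (n r)! ∣ n j * (∑ r ∈ s, n r - 1)! := by
  cases hnj : n j with
  | zero => simp
  | succ a =>
    have key : a ! * ∏ r ∈ s.erase j, (n r)! ∣ (a + ∑ r ∈ s.erase j, n r)! :=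
      (Nat.mul_dvd_mul_left _ (prod_factorial_dvd_factorial_sum _ _)).trans
        (factorial_mul_factorial_dvd_factorial_add _ _)
    rw [← mul_prod_erase s _ hj, ← add_sum_erase s _ hj, hnj, factorial_succ, mul_assoc,
      add_right_comm, Nat.add_sub_cancel]
    exact Nat.mul_dvd_mul_left _ key

lemma gammaStar_natCast_add_one (k : ℕ) : gammaStar ((k : ℤ) + 1) = k ! := by
  rw [gammaStar, if_pos (by omega)]
  norm_num

lemma gammaStar_neg_natCast (k : ℕ) : gammaStar (-k) = (-1) ^ k / k ! := by
  rw [gammaStar, if_neg (by omega), zpow_neg, zpow_natCast, ← inv_pow, inv_neg, inv_one]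
  norm_num

lemma prod_inv_gammaStar_add_one {ι : Type*} [Fintype ι] [DecidableEq ι] {ℓ : ι → ℤ} {i : ι}
    {k : ℕ} (hi : ℓ i = -(k + 1)) (hpos : ∀ r, r ≠ i → 0 ≤ ℓ r) :
    ∏ r, (gammaStar (ℓ r + 1))⁻¹ = (-1) ^ k * k ! / ∏ r ∈ univ.erase i, ((ℓ r).toNat ! : ℚ) := by
  have hrest : ∀ r ∈ univ.erase i, (gammaStar (ℓ r + 1))⁻¹ = ((ℓ r).toNat ! : ℚ)⁻¹ := by
    intro r hr
    nth_rewrite 1 [← Int.toNat_of_nonneg (hpos r (ne_of_mem_erase hr))]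
    rw [gammaStar_natCast_add_one]
  rw [← mul_prod_erase univ _ (mem_univ i), prod_congr rfl hrest, prod_inv_distrib, hi,
    show -((k : ℤ) + 1) + 1 = -k by ring, gammaStar_neg_natCast]
  field_simp
  rw [← pow_mul, mul_comm, pow_mul]
  norm_num

lemma exists_intCast_eq_mul_div_of_dvd {a d : ℕ} (h : d ∣ a) (ε : ℤ) :
    ∃ z : ℤ, (ε : ℚ) * a / d = z :=
  ⟨ε * (a / d : ℕ), by rw [Int.cast_mul, Int.cast_natCast, Nat.cast_div_charZero h]; ring⟩

theorem coeff_period_series_integral_general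
    (N : ℕ) (i : Fin N) (ℓ : Fin N → ℤ)
    (hpos : ∀ r : Fin N, r ≠ i → 0 ≤ ℓ r)
    (hsum : ∑ r : Fin N, ℓ r = 0) :
    ∀ j : Fin N, ∃ z : ℤ, (ℓ j : ℚ) * ∏ r : Fin N, (gammaStar (ℓ r + 1))⁻¹ = (z : ℚ) := by
  intro j
  by_cases hj0 : ℓ j = 0
  · exact ⟨0, by simp [hj0]⟩
  set n : Fin N → ℕ := fun r => (ℓ r).toNat
  have hn : ∀ r ∈ univ.erase i, (n r : ℤ) = ℓ r := fun r hr =>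
    Int.toNat_of_nonneg (hpos r (ne_of_mem_erase hr))
  have hi : ℓ i = -∑ r ∈ univ.erase i, (n r : ℤ) := by
    rw [← add_sum_erase univ ℓ (mem_univ i)] at hsum
    rw [sum_congr rfl hn]
    linarith
  obtain ⟨k, hk⟩ : ∃ k, ∑ r ∈ univ.erase i, n r = k + 1 := by
    refine Nat.exists_eq_add_one.mpr (Nat.pos_of_ne_zero fun h0 => hj0 ?_)
    by_cases hji : j = i
    · simp [hji, hi, ← Nat.cast_sum, h0]
    · have hj := mem_erase.2 ⟨hji, mem_univ j⟩
      rw [← hn j hj, (sum_eq_zero_iff.1 h0) j hj, Nat.cast_zero]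
  rw [prod_inv_gammaStar_add_one (k := k) (by rw [hi, ← Nat.cast_sum, hk]; push_cast; ring) hpos]
  by_cases hji : j = i
  · obtain ⟨z, hz⟩ := exists_intCast_eq_mul_div_of_dvd
      (prod_factorial_dvd_factorial_sum (univ.erase i) n) ((-1) ^ (k + 1))
    refine ⟨z, ?_⟩
    rw [← hz, hji, hi, ← Nat.cast_sum, hk, factorial_succ]
    push_cast
    ring
  · have hj := mem_erase.2 ⟨hji, mem_univ j⟩
    obtain ⟨z, hz⟩ := exists_intCast_eq_mul_div_of_dvd
      (prod_factorial_dvd_mul_factorial_sum_sub_one n hj) ((-1) ^ k)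
    refine ⟨z, ?_⟩
    rw [← hz, ← hn j hj, hk, Nat.add_sub_cancel]
    push_cast
    ring

/-- Integrality of the coefficients of the A-hypergeometric period series `Ψ`:
if `ℓ ∈ ℤ^N` is nonzero with `ℓ_r ≥ 0` for `r ≠ i` and `Σ_r ℓ_r = 0`, then
`ℓ_j·∏_{r=1}^N 1/Γ*(ℓ_r+1)` is an integer for every `j`. -/
theorem coeff_period_series_integral
    (N : ℕ) (hN : 1 ≤ N) (i : Fin N) (ℓ : Fin N → ℤ)
    (hne : ℓ ≠ 0)
    (hpos : ∀ r : Fin N, r ≠ i → 0 ≤ ℓ r)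
    (hsum : ∑ r : Fin N, ℓ r = 0) :
    ∀ j : Fin N, ∃ z : ℤ, (ℓ j : ℚ) * ∏ r : Fin N, (gammaStar (ℓ r + 1))⁻¹ = (z : ℚ) :=
  coeff_period_series_integral_general N i ℓ hpos hsum
end
end

section
/- Let p be an odd prime. Let G_p(z) ∈ ℤ[z] be the coefficient of (xy)^{p−1} in the polynomial (y² − x(x−1)(x−z))^{p−1}, viewed as a polynomial in x and y with coefficients in ℤ[z]. Let F_p(z) = Σ_{k=0}^{p−1} (C(2k,k)/4^k)² z^k ∈ ℤ_p[z] be the truncation of the hypergeometric series F(1/2,1/2,1|z). Then G_p(z) ≡ (−1)^{(p−1)/2} F_p(z) (mod p ℤ_p[z]). -/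
noncomputable section

namespace GpAux

open Polynomial

lemma single_eq_iff (a b k c : ℕ) :
    (Finsupp.single (0 : Fin 2) a + Finsupp.single 1 b
      = Finsupp.single (0 : Fin 2) k + Finsupp.single 1 c) ↔ (a = k ∧ b = c) := by
  constructor
  · intro h
    constructor
    · have := congrArg (fun f => f (0 : Fin 2)) h
      simpa using this
    · have := congrArg (fun f => f (1 : Fin 2)) h
      simpa using this
  · rintro ⟨rfl, rfl⟩; rfl

lemma coeff_key {R : Type*} [CommRing R] (q : Polynomial R) (a b c : ℕ) :
    MvPolynomial.coeff (Finsupp.single (0 : Fin 2) a + Finsupp.single 1 b)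
      ((MvPolynomial.X 1) ^ c * Polynomial.eval₂ MvPolynomial.C (MvPolynomial.X (0 : Fin 2)) q)
    = if b = c then q.coeff a else 0 := by
  induction q using Polynomial.induction_on' with
  | add p q hp hq =>
    rw [Polynomial.eval₂_add, mul_add, MvPolynomial.coeff_add, hp, hq, Polynomial.coeff_add]
    split_ifs <;> simp
  | monomial k r =>
    rw [Polynomial.eval₂_monomial]
    have h1 : (MvPolynomial.X (1 : Fin 2) : MvPolynomial (Fin 2) R) ^ c
        * (MvPolynomial.C r * MvPolynomial.X 0 ^ k)
        = MvPolynomial.monomial (Finsupp.single (0 : Fin 2) k + Finsupp.single 1 c) r := by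
      rw [MvPolynomial.X_pow_eq_monomial, MvPolynomial.X_pow_eq_monomial,
        MvPolynomial.C_mul_monomial, MvPolynomial.monomial_mul, one_mul, mul_one, add_comm]
    rw [h1, MvPolynomial.coeff_monomial, Polynomial.coeff_monomial]
    by_cases hbc : b = c
    · subst hbc
      by_cases hak : a = k
      · subst hak; simp
      · rw [if_neg, if_pos rfl, if_neg (fun h => hak h.symm)]
        intro h; exact hak ((single_eq_iff a b k b).mp h.symm).1
    · rw [if_neg, if_neg hbc]
      intro h; exact hbc ((single_eq_iff a b k c).mp h.symm).2

variable {p : ℕ} [hp : Fact p.Prime]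

lemma natCast_ne_zero_of_lt {k : ℕ} (h0 : 0 < k) (h : k < p) : (k : ZMod p) ≠ 0 := by
  intro hz
  have hd := (ZMod.natCast_eq_zero_iff k p).mp hz
  exact absurd (Nat.le_of_dvd h0 hd) (by omega)

lemma choose_pred_mod : ∀ k < p, (((p-1).choose k : ℕ) : ZMod p) = (-1)^k := by
  intro k hk
  induction k with
  | zero => simp
  | succ k ih =>
    have hk' : k < p := Nat.lt_of_succ_lt hk
    have h1 := Nat.choose_succ_right_eq (p-1) k
    have hcast : ((p - 1 - k : ℕ) : ZMod p) = -1 - k := by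
      have h : (p : ℕ) - 1 - k = p - (1 + k) := by omega
      rw [h, Nat.cast_sub (by omega : 1 + k ≤ p)]
      simp [ZMod.natCast_self]
      ring
    have h2 : (((p-1).choose (k+1) : ℕ) : ZMod p) * ((k : ZMod p)+1)
        = (-1)^(k+1) * ((k:ZMod p)+1) := by
      have := congrArg (fun n : ℕ => (n : ZMod p)) h1
      push_cast at this
      rw [this, ih hk', hcast]
      ring
    have hunit : ((k : ZMod p)+1) ≠ 0 := by
      have := natCast_ne_zero_of_lt (p := p) (k := k+1) (Nat.succ_pos k) hk
      push_cast at this; exact this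
    exact mul_right_cancel₀ hunit h2

lemma four_pow_choose_mod {m : ℕ} (hpm : p = 2*m+1) :
    ∀ k ≤ m, (4 : ZMod p)^k * (m.choose k : ZMod p) = (-1)^k * (((2*k).choose k : ℕ) : ZMod p) := by
  intro k hk
  induction k with
  | zero => simp
  | succ k ih =>
    have hk' : k ≤ m := Nat.le_of_succ_le hk
    have IH := ih hk'
    have hA : ((m.choose (k+1) : ℕ) : ZMod p) * ((k:ZMod p)+1)
        = (m.choose k : ZMod p) * ((m - k : ℕ) : ZMod p) := by
      have := congrArg (fun n : ℕ => (n : ZMod p)) (Nat.choose_succ_right_eq m k)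
      push_cast at this
      exact_mod_cast this
    have hB : ((k:ZMod p)+1) * (((2*(k+1)).choose (k+1) : ℕ) : ZMod p)
        = 2 * (2*(k:ZMod p)+1) * (((2*k).choose k : ℕ) : ZMod p) := by
      have := congrArg (fun n : ℕ => (n : ZMod p)) (Nat.succ_mul_centralBinom_succ k)
      simp only [Nat.centralBinom] at this
      push_cast at this
      exact_mod_cast this
    have hmk : (2 : ZMod p) * ((m - k : ℕ) : ZMod p) = -(2*(k:ZMod p)+1) := by
      have h0 : ((2*m+1 : ℕ) : ZMod p) = 0 := by rw [← hpm]; exact ZMod.natCast_self p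
      push_cast at h0
      rw [Nat.cast_sub hk']
      linear_combination h0
    have hcancel : (2 : ZMod p) * ((k:ZMod p)+1) ≠ 0 := by
      have h2 : (2 : ZMod p) ≠ 0 := by
        have := natCast_ne_zero_of_lt (p := p) (k := 2) (by norm_num) (by omega)
        push_cast at this; exact this
      have hk1 : ((k:ZMod p)+1) ≠ 0 := by
        have := natCast_ne_zero_of_lt (p := p) (k := k+1) (Nat.succ_pos k) (by omega)
        push_cast at this; exact this
      exact mul_ne_zero h2 hk1
    apply mul_right_cancel₀ hcancel
    linear_combination (8*(4:ZMod p)^k) * hA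
      + (4*(4:ZMod p)^k * ((m.choose k : ℕ) : ZMod p)) * hmk
      + (-4*(2*(k:ZMod p)+1)) * IH
      + ((-1:ZMod p)^k*2) * hB

lemma prime_dvd_centralBinom {m k : ℕ} (hpm : p = 2*m+1) (h1 : m < k) (h2 : k < p) :
    p ∣ (2*k).choose k := by
  have hpf : p ∣ Nat.factorial (2*k) := Nat.dvd_factorial hp.out.pos (show p ≤ 2*k by omega)
  have heq : (2*k).choose k * Nat.factorial k * Nat.factorial k = Nat.factorial (2*k) := by
    have := Nat.choose_mul_factorial_mul_factorial (show k ≤ 2*k by omega)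
    rwa [show 2*k - k = k by omega] at this
  have hpk : ¬ p ∣ Nat.factorial k := by
    rw [Nat.Prime.dvd_factorial hp.out]; omega
  rw [← heq] at hpf
  rcases (Nat.Prime.dvd_mul hp.out).mp hpf with h | h
  · rcases (Nat.Prime.dvd_mul hp.out).mp h with h' | h'
    · exact h'
    · exact absurd h' hpk
  · exact absurd h hpk

abbrev R := Polynomial ℤ

lemma inner_coeff (m : ℕ) :
    (-1:R)^m * ((Polynomial.X * (Polynomial.X - 1) *
        (Polynomial.X - Polynomial.C (Polynomial.X : R)) : Polynomial R)^m).coeff (2*m)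
    = ∑ i ∈ Finset.range (m+1), ((m.choose i : R))^2 * Polynomial.X ^ i := by
  have hg : (Polynomial.X * (Polynomial.X - 1) *
      (Polynomial.X - Polynomial.C (Polynomial.X : R)) : Polynomial R)^m
      = Polynomial.X^m * ((Polynomial.X + Polynomial.C (-1 : R))^m
          * (Polynomial.X + Polynomial.C (-(Polynomial.X : R)))^m) := by
    rw [← mul_pow, ← mul_pow]
    congr 1
    simp only [map_neg, map_one]
    ring
  rw [hg]
  rw [show 2*m = m + m from by ring, coeff_X_pow_mul]
  rw [Polynomial.coeff_mul]
  rw [Finset.Nat.sum_antidiagonal_eq_sum_range_succ_mk]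
  rw [Finset.mul_sum]
  apply Finset.sum_congr rfl
  intro i hi
  have him : i ≤ m := Nat.lt_succ_iff.mp (Finset.mem_range.mp hi)
  rw [coeff_X_add_C_pow, coeff_X_add_C_pow]
  rw [show m - (m - i) = i from by omega]
  rw [Nat.choose_symm him]
  rw [show (-(Polynomial.X : R))^i = (-1)^i * Polynomial.X^i from by ring]
  rw [show ((-1:R))^(m-i) * ((m.choose i : R)) * ((-1)^i * Polynomial.X^i * (m.choose i : R))
      = ((-1:R))^(m-i) * (-1)^i * ((m.choose i : R))^2 * Polynomial.X^i from by ring,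
    ← pow_add, Nat.sub_add_cancel him]
  rw [show ((-1:R))^m * ((-1:R)^m * ((m.choose i : R))^2 * Polynomial.X^i)
      = ((-1:R)*(-1))^m * ((m.choose i : R))^2 * Polynomial.X^i from by rw [mul_pow]; ring]
  simp

lemma G_eval (m : ℕ) :
    (MvPolynomial.coeff
      (Finsupp.single (0 : Fin 2) (2*m) + Finsupp.single (1 : Fin 2) (2*m))
      (((MvPolynomial.X 1) ^ 2 -
          MvPolynomial.X 0 * (MvPolynomial.X 0 - 1) *
            (MvPolynomial.X 0 - MvPolynomial.C Polynomial.X)) ^ (2*m) :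
        MvPolynomial (Fin 2) (Polynomial ℤ)))
    = ((2*m).choose m : Polynomial ℤ) *
        ∑ i ∈ Finset.range (m+1), ((m.choose i : Polynomial ℤ))^2 * Polynomial.X ^ i := by
  set φ : Polynomial R →+* MvPolynomial (Fin 2) R :=
    Polynomial.eval₂RingHom MvPolynomial.C (MvPolynomial.X (0 : Fin 2)) with hφ
  set g : Polynomial R := Polynomial.X * (Polynomial.X - 1) *
      (Polynomial.X - Polynomial.C (Polynomial.X : R)) with hgdef
  have hg : (MvPolynomial.X 0 * (MvPolynomial.X 0 - 1) *
      (MvPolynomial.X 0 - MvPolynomial.C Polynomial.X) : MvPolynomial (Fin 2) R) = φ g := by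
    simp [hφ, hgdef]
  rw [hg, sub_eq_add_neg, add_pow]
  rw [MvPolynomial.coeff_sum]
  have hterm : ∀ j ∈ Finset.range (2*m+1),
      MvPolynomial.coeff (Finsupp.single (0 : Fin 2) (2*m) + Finsupp.single 1 (2*m))
        (((MvPolynomial.X 1 : MvPolynomial (Fin 2) R) ^ 2)^j * (-(φ g))^(2*m-j)
          * ((2*m).choose j : MvPolynomial (Fin 2) R))
      = (if (2*m : ℕ) = 2*j then ((-g)^(2*m-j)).coeff (2*m) else 0) * ((2*m).choose j : R) := by
    intro j _
    have h1 : (-(φ g))^(2*m-j) = φ ((-g)^(2*m-j)) := by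
      rw [map_pow, map_neg]
    have h2 : ((2*m).choose j : MvPolynomial (Fin 2) R)
        = MvPolynomial.C (((2*m).choose j : R)) := by
      simp
    rw [h1, h2, mul_comm _ (MvPolynomial.C (((2*m).choose j : R))), MvPolynomial.coeff_C_mul,
      ← pow_mul]
    simp only [hφ, Polynomial.coe_eval₂RingHom]
    rw [coeff_key]
    ring
  rw [Finset.sum_congr rfl hterm]
  rw [Finset.sum_eq_single m]
  · rw [if_pos rfl, show 2*m - m = m from by omega]
    have h3 : ((-g)^m).coeff (2*m) = (-1:R)^m * (g^m).coeff (2*m) := by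
      have h4 : ((-g)^m) = Polynomial.C ((-1:R)^m) * g^m := by
        rw [neg_pow g m, map_pow, map_neg, map_one]
      rw [h4, Polynomial.coeff_C_mul]
    rw [h3, hgdef, inner_coeff m, mul_comm]
  · intro j hj hjm
    rw [if_neg (by omega), zero_mul]
  · intro h
    exact absurd (Finset.mem_range.mpr (by omega)) h

end GpAux

open GpAux in
/-- `G_p(z) ≡ (−1)^{(p−1)/2} F_p(z) mod p`, where `G_p(z)` is the coefficient of
`x^{p−1}y^{p−1}` in `(y² − x(x−1)(x−z))^{p−1}` and `F_p(z) = Σ_{k<p} (C(2k,k)/4^k)² z^k`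
is the truncated hypergeometric series.  Here `c k ∈ ℤ_p` is the unique element with
`4^k · c k = C(2k,k)` (it exists since `p` is odd). -/
theorem Gp_congruent_Fp_mod_p
    (p : ℕ) [Fact p.Prime] (hp : Odd p)
    (c : ℕ → ℤ_[p]) (hc : ∀ k, (4 : ℤ_[p]) ^ k * c k = (Nat.choose (2 * k) k : ℤ_[p]))
    (G : Polynomial ℤ)
    (hG : G = MvPolynomial.coeff
      (Finsupp.single (0 : Fin 2) (p - 1) + Finsupp.single (1 : Fin 2) (p - 1))
      (((MvPolynomial.X 1) ^ 2 -
          MvPolynomial.X 0 * (MvPolynomial.X 0 - 1) *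
            (MvPolynomial.X 0 - MvPolynomial.C Polynomial.X)) ^ (p - 1) :
        MvPolynomial (Fin 2) (Polynomial ℤ)))
    (Fp : Polynomial ℤ_[p])
    (hFp : Fp = ∑ k ∈ Finset.range p, Polynomial.C ((c k) ^ 2) * Polynomial.X ^ k) :
    ∀ k : ℕ, (p : ℤ_[p]) ∣
      (Polynomial.map (Int.castRingHom ℤ_[p]) G -
        Polynomial.C ((-1 : ℤ_[p]) ^ ((p - 1) / 2)) * Fp).coeff k := by
  intro k
  obtain ⟨m, hm⟩ := hp
  have hp2 : 2 ≤ p := (Fact.out : p.Prime).two_le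
  have hm1 : 1 ≤ m := by omega
  have hm' : p - 1 = 2*m := by omega
  have hmdiv : (p - 1)/2 = m := by omega
  -- closed form for G
  have hGf : G = ((2*m).choose m : Polynomial ℤ) *
      ∑ i ∈ Finset.range (m+1), ((m.choose i : Polynomial ℤ))^2 * Polynomial.X ^ i := by
    rw [hG, hm', G_eval]
  -- coefficient of G
  have hGc : G.coeff k
      = ((2*m).choose m : ℤ) * (if k ∈ Finset.range (m+1) then ((m.choose k : ℤ))^2 else 0) := by
    rw [hGf, show (((2*m).choose m : Polynomial ℤ)) = Polynomial.C (((2*m).choose m : ℤ)) from by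
      simp, Polynomial.coeff_C_mul, Polynomial.finset_sum_coeff]
    congr 1
    have hsum : ∀ i, (((m.choose i : Polynomial ℤ))^2 * Polynomial.X^i).coeff k
        = if i = k then ((m.choose i : ℤ))^2 else 0 := by
      intro i
      rw [show ((m.choose i : Polynomial ℤ))^2 = Polynomial.C ((m.choose i : ℤ)^2) from by
        rw [map_pow, map_natCast], Polynomial.coeff_C_mul, Polynomial.coeff_X_pow]
      by_cases hik : i = k
      · rw [if_pos hik, if_pos hik.symm, mul_one]
      · rw [if_neg hik, if_neg (fun h => hik h.symm), mul_zero]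
    simp only [hsum]
    rw [Finset.sum_ite_eq' (Finset.range (m+1)) k (fun i => ((m.choose i : ℤ))^2)]
  -- coefficient of Fp
  have hFc : Fp.coeff k = if k ∈ Finset.range p then (c k)^2 else 0 := by
    rw [hFp, Polynomial.finset_sum_coeff]
    have hsum : ∀ i, ((Polynomial.C ((c i)^2)) * Polynomial.X^i).coeff k
        = if i = k then (c i)^2 else 0 := by
      intro i
      rw [Polynomial.coeff_C_mul, Polynomial.coeff_X_pow]
      by_cases hik : i = k
      · rw [if_pos hik, if_pos hik.symm, mul_one]
      · rw [if_neg hik, if_neg (fun h => hik h.symm), mul_zero]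
    simp only [hsum]
    rw [Finset.sum_ite_eq' (Finset.range p) k (fun i => (c i)^2)]
  -- reduce divisibility to ZMod p
  have hdvd : ∀ x : ℤ_[p], PadicInt.toZMod x = 0 → (p : ℤ_[p]) ∣ x := by
    intro x hx
    rw [← Ideal.mem_span_singleton (α := ℤ_[p]), ← PadicInt.maximalIdeal_eq_span_p,
      ← PadicInt.ker_toZMod, RingHom.mem_ker]
    exact hx
  apply hdvd
  rw [Polynomial.coeff_sub, Polynomial.coeff_map, Polynomial.coeff_C_mul]
  rw [map_sub, map_mul, map_pow, map_neg, map_one]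
  set T : ℤ_[p] →+* ZMod p := PadicInt.toZMod with hT
  set cb : ZMod p := T (c k) with hcb
  have hck : (4 : ZMod p)^k * cb = (((2*k).choose k : ℕ) : ZMod p) := by
    have := congrArg T (hc k)
    rw [map_mul, map_pow, map_natCast] at this
    rw [hcb]
    convert this using 3
    exact (map_ofNat T 4).symm
  have h4 : (4 : ZMod p)^k ≠ 0 := by
    apply pow_ne_zero
    have h2 : (2 : ZMod p) ≠ 0 := by
      have := natCast_ne_zero_of_lt (p := p) (k := 2) (by norm_num) (by omega)
      push_cast at this; exact this
    have : (4 : ZMod p) = 2 * 2 := by norm_num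
    rw [this]
    exact mul_ne_zero h2 h2
  rw [hGc, hFc, hmdiv]
  have hTck : T (c k ^ 2) = cb ^ 2 := by rw [map_pow, hcb]
  by_cases hk1 : k ≤ m
  · rw [if_pos (Finset.mem_range.mpr (by omega)), if_pos (Finset.mem_range.mpr (by omega))]
    simp only [eq_intCast, map_intCast, hTck]
    push_cast
    have hch : (((2*m).choose m : ℕ) : ZMod p) = (-1)^m := by
      rw [← hm']; exact choose_pred_mod m (by omega)
    have hmk := four_pow_choose_mod (p := p) hm k hk1
    rw [← hck] at hmk
    have hchoosek : ((m.choose k : ℕ) : ZMod p) = (-1)^k * cb := by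
      apply mul_left_cancel₀ h4
      rw [hmk]; ring
    rw [hch, hchoosek, mul_pow, ← pow_mul, show k*2 = 2*k from by ring, pow_mul,
      neg_one_sq, one_pow, one_mul]
    ring
  · by_cases hk2 : k < p
    · rw [if_neg (by simp only [Finset.mem_range]; omega), if_pos (Finset.mem_range.mpr hk2)]
      have hdc : (((2*k).choose k : ℕ) : ZMod p) = 0 :=
        (ZMod.natCast_eq_zero_iff _ p).mpr
          (prime_dvd_centralBinom (p := p) hm (by omega) hk2)
      have hcb0 : cb = 0 := by
        have h0 : (4 : ZMod p)^k * cb = 0 := hck.trans hdc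
        exact (mul_eq_zero.mp h0).resolve_left h4
      rw [hTck, hcb0]
      norm_num
    · rw [if_neg (by simp only [Finset.mem_range]; omega), if_neg (by simp only [Finset.mem_range]; omega)]
      simp only [mul_zero, map_zero, sub_zero]
end
end
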